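/- Assume hypotheses (EC) and (UC). Then the two parameter sets A = {(M,r) : M > 0 and r ∈ [r(M,0),r_T) ∩ (0,r_T)} and B = {(M,r) : r ∈ (0,r_T) and M ≥ M(0,r)} are equal. -/

import Mathlib

open MeasureTheory Set Filter Topology

noncomputable section

variable {H : Type*} [NormedAddCommGroup H] [InnerProductSpace ℂ H] [CompleteSpace H]
  [SecondCountableTopology H]

/-- `U` is a strongly continuous one-parameter group of unitary operators on `H`,
abstracting the Schrödinger group `e^{-iΔt}`. -/
def IsUnitaryGroup (U : ℝ → H →L[ℂ] H) : Prop :=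
  U 0 = ContinuousLinearMap.id ℂ H ∧
  (∀ s t : ℝ, U (s + t) = (U s).comp (U t)) ∧
  (∀ (t : ℝ) (x : H), ‖U t x‖ = ‖x‖) ∧
  ∀ x : H, Continuous fun t : ℝ => U t x

/-- `B` is a nonzero orthogonal projection on `H`, abstracting multiplication by `χ_ω`. -/
def IsOrthProj (B : H →L[ℂ] H) : Prop :=
  B ≠ 0 ∧ B.comp B = B ∧ ∀ x y : H, (inner ℂ (B x) y : ℂ) = inner ℂ x (B y)

/-- Membership in `L∞((a,b);H)`. -/
def MemLinfty (u : ℝ → H) (a b : ℝ) : Prop :=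
  AEStronglyMeasurable u (volume : Measure ℝ) ∧
    ∃ c : ℝ, ∀ᵐ t : ℝ ∂volume, t ∈ Ioo a b → ‖u t‖ ≤ c

/-- Membership in `L∞((0,∞);H)`. -/
def MemLinftyInf (u : ℝ → H) : Prop :=
  AEStronglyMeasurable u (volume : Measure ℝ) ∧
    ∃ c : ℝ, ∀ᵐ t : ℝ ∂volume, t ∈ Ioi (0 : ℝ) → ‖u t‖ ≤ c

/-- The `L∞((a,b);H)` norm of `u`. -/
def supNorm (u : ℝ → H) (a b : ℝ) : ℝ :=
  sInf {c : ℝ | 0 ≤ c ∧ ∀ᵐ t : ℝ ∂volume, t ∈ Ioo a b → ‖u t‖ ≤ c}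

/-- `stateT U B T τ u y₀ = y(T; χ_{(τ,T)}u, y₀)`, the mild solution at time `T` of the
controlled Schrödinger equation with initial state `y₀`, the control acting on `(τ,T)`:
`y(T) = U(T)y₀ + ∫_τ^T U(T-s) B u(s) ds`.  The free state at time `t` starting from `y₀`
with control `u` active from time `0` is `stateT U B t 0 u y₀`. -/
def stateT (U : ℝ → H →L[ℂ] H) (B : H →L[ℂ] H) (T τ : ℝ) (u : ℝ → H) (y₀ : H) : H :=
  U T y₀ + ∫ s in Ioo τ T, U (T - s) (B (u s))

/-- Hypothesis (EC): `L∞`-exact controllability with cost. -/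
def EC (U : ℝ → H →L[ℂ] H) (B : H →L[ℂ] H) : Prop :=
  ∀ τ : ℝ, 0 < τ → ∃ C : ℝ, 0 < C ∧ ∀ y₀ z : H, ∃ u : ℝ → H,
    AEStronglyMeasurable u (volume : Measure ℝ) ∧
    (∀ᵐ t : ℝ ∂volume, t ∈ Ioo 0 τ → ‖u t‖ ≤ C * ‖z - U τ y₀‖) ∧
    stateT U B τ 0 u y₀ = z

/-- Hypothesis (UC): unique continuation. -/
def UC (U : ℝ → H →L[ℂ] H) (B : H →L[ℂ] H) : Prop :=
  ∀ η : H, η ≠ 0 → volume {t : ℝ | B (U t η) = 0} = 0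

/-- The admissible set `U_M` of the minimal time problem `(TOCP)_M`. -/
def UMset (U : ℝ → H →L[ℂ] H) (B : H →L[ℂ] H) (y₀ : H) (M : ℝ) : Set (ℝ → H) :=
  {u | MemLinftyInf u ∧ (∀ᵐ t : ℝ ∂volume, t ∈ Ioi (0 : ℝ) → ‖u t‖ ≤ M) ∧
    ∃ s : ℝ, 0 < s ∧ stateT U B s 0 u y₀ = 0}

/-- The minimal time `T_M` of `(TOCP)_M`. -/
def Tmin (U : ℝ → H →L[ℂ] H) (B : H →L[ℂ] H) (y₀ : H) (M : ℝ) : ℝ :=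
  sInf {s : ℝ | 0 < s ∧ ∃ u ∈ UMset U B y₀ M, stateT U B s 0 u y₀ = 0}

/-- The admissible set `V_T` of the minimal norm problem `(NOCP)_T`. -/
def VTset (U : ℝ → H →L[ℂ] H) (B : H →L[ℂ] H) (y₀ : H) (T : ℝ) : Set (ℝ → H) :=
  {v | MemLinfty v 0 T ∧ stateT U B T 0 v y₀ = 0}

/-- The minimal norm `M_T` of `(NOCP)_T`. -/
def Mmin (U : ℝ → H →L[ℂ] H) (B : H →L[ℂ] H) (y₀ : H) (T : ℝ) : ℝ :=
  sInf ((fun v : ℝ → H => supNorm v 0 T) '' VTset U B y₀ T)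

/-- Hypothesis (BB): bang-bang property of the minimal time problems. -/
def BB (U : ℝ → H →L[ℂ] H) (B : H →L[ℂ] H) : Prop :=
  ∀ y₀ : H, y₀ ≠ 0 → ∀ M : ℝ, 0 < M → ∀ u ∈ UMset U B y₀ M,
    stateT U B (Tmin U B y₀ M) 0 u y₀ = 0 →
    ∀ᵐ t : ℝ ∂volume, t ∈ Ioo 0 (Tmin U B y₀ M) → ‖u t‖ = M

/-- Hypothesis (ET): existence of optimal controls for the minimal time problems. -/
def ET (U : ℝ → H →L[ℂ] H) (B : H →L[ℂ] H) : Prop :=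
  ∀ y₀ : H, y₀ ≠ 0 → ∀ M : ℝ, 0 < M →
    ∃ u ∈ UMset U B y₀ M, stateT U B (Tmin U B y₀ M) 0 u y₀ = 0

/-- The admissible set `U_{M,τ}`. -/
def UadmSet (M τ T : ℝ) : Set (ℝ → H) :=
  {u | MemLinfty u 0 T ∧ ∀ᵐ t : ℝ ∂volume, t ∈ Ioo τ T → ‖u t‖ ≤ M}

/-- The optimal distance `r(M,τ)` of the optimal target problem `(OP)^{M,τ}`. -/
def rOP (U : ℝ → H →L[ℂ] H) (B : H →L[ℂ] H) (y₀ z_d : H) (T M τ : ℝ) : ℝ :=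
  sInf ((fun u : ℝ → H => ‖stateT U B T τ u y₀ - z_d‖) '' UadmSet M τ T)

/-- `u` is an optimal control to `(OP)^{M,τ}`. -/
def IsOptOP (U : ℝ → H →L[ℂ] H) (B : H →L[ℂ] H) (y₀ z_d : H) (T M τ : ℝ) (u : ℝ → H) :
    Prop :=
  u ∈ UadmSet M τ T ∧ ‖stateT U B T τ u y₀ - z_d‖ = rOP U B y₀ z_d T M τ

/-- `M^τ`, the minimal norm for exact steering to the target `z_d`. -/
def Mtau (U : ℝ → H →L[ℂ] H) (B : H →L[ℂ] H) (y₀ z_d : H) (T τ : ℝ) : ℝ :=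
  sInf ((fun u : ℝ → H => supNorm u τ T) ''
    {u : ℝ → H | MemLinfty u 0 T ∧ stateT U B T τ u y₀ = z_d})

/-- The admissible set `W_{τ,r}` of the optimal norm problem `(NP)^{τ,r}`. -/
def WadmSet (U : ℝ → H →L[ℂ] H) (B : H →L[ℂ] H) (y₀ z_d : H) (T τ r : ℝ) :
    Set (ℝ → H) :=
  {u | MemLinfty u 0 T ∧ ‖stateT U B T τ u y₀ - z_d‖ ≤ r}

/-- The optimal norm `M(τ,r)` of `(NP)^{τ,r}`. -/
def MNP (U : ℝ → H →L[ℂ] H) (B : H →L[ℂ] H) (y₀ z_d : H) (T τ r : ℝ) : ℝ :=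
  sInf ((fun u : ℝ → H => supNorm u τ T) '' WadmSet U B y₀ z_d T τ r)

/-- `u` is an optimal control to `(NP)^{τ,r}`. -/
def IsOptNP (U : ℝ → H →L[ℂ] H) (B : H →L[ℂ] H) (y₀ z_d : H) (T τ r : ℝ) (u : ℝ → H) :
    Prop :=
  u ∈ WadmSet U B y₀ z_d T τ r ∧ supNorm u τ T = MNP U B y₀ z_d T τ r

/-- The admissible set `V_{M,r}` of the second type optimal time problem `(TP)^{M,r}`. -/
def VadmSet (U : ℝ → H →L[ℂ] H) (B : H →L[ℂ] H) (y₀ z_d : H) (T M r : ℝ) :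
    Set (ℝ → H) :=
  {u | ∃ τ : ℝ, τ ∈ Ico (0 : ℝ) T ∧ u ∈ UadmSet M τ T ∧
    ‖stateT U B T τ u y₀ - z_d‖ ≤ r}

/-- `τ_{M,r}(u)`. -/
def tauOf (U : ℝ → H →L[ℂ] H) (B : H →L[ℂ] H) (y₀ z_d : H) (T r : ℝ) (u : ℝ → H) : ℝ :=
  sSup {τ : ℝ | τ ∈ Ico (0 : ℝ) T ∧ ‖stateT U B T τ u y₀ - z_d‖ ≤ r}

/-- The optimal time `τ(M,r)` of `(TP)^{M,r}`. -/
def tauTP (U : ℝ → H →L[ℂ] H) (B : H →L[ℂ] H) (y₀ z_d : H) (T M r : ℝ) : ℝ :=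
  sSup (tauOf U B y₀ z_d T r '' VadmSet U B y₀ z_d T M r)

/-- `u` is an optimal control to `(TP)^{M,r}`. -/
def IsOptTP (U : ℝ → H →L[ℂ] H) (B : H →L[ℂ] H) (y₀ z_d : H) (T M r : ℝ) (u : ℝ → H) :
    Prop :=
  u ∈ VadmSet U B y₀ z_d T M r ∧
    ‖stateT U B T (tauTP U B y₀ z_d T M r) u y₀ - z_d‖ ≤ r

/-- The adjoint state `φ*(t) = U(t-T)(z_d - y(T; χ_{(τ,T)}u, y₀))`. -/
def adjState (U : ℝ → H →L[ℂ] H) (B : H →L[ℂ] H) (y₀ z_d : H) (T τ : ℝ) (u : ℝ → H)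
    (t : ℝ) : H :=
  U (t - T) (z_d - stateT U B T τ u y₀)

/-!
Both inclusions are `ε`-arguments on the two infima. If `r(M,0) ≤ r`, take a control in
`U_{M,0}` whose final state lies at distance `d < r + δ` from `z_d`; exact controllability
with cost `C` adds a correction of size `C (d - r)` that moves the final state onto the sphere
of radius `r`, so `M(0,r) ≤ M + C δ`. Conversely, if `M(0,r) ≤ M`, take a control reaching
`B(z_d,r)` with norm below `M + ε` and shrink it by the factor `M / (M + ε)`: it becomes
admissible for `(OP)^{M,0}` and its final state moves by at most `‖B‖ T ε`. Positivity of `M`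
comes from `r_T - r ≤ ‖y(T;u,y₀) - U(T)y₀‖ ≤ ‖B‖ T ‖u‖_∞` for every `u ∈ W_{0,r}`.
-/

theorem le_of_forall_pos_le_add_mul {a b K : ℝ} (hK : 0 ≤ K)
    (h : ∀ ε > 0, a ≤ b + K * ε) : a ≤ b := by
  refine le_of_forall_pos_le_add fun ε hε => (h (ε / (K + 1)) (by positivity)).trans ?_
  gcongr
  rw [mul_div_assoc', div_le_iff₀ (by positivity)]
  nlinarith

variable {E : Type*} [NormedAddCommGroup E]

section SupNorm

variable {u : ℝ → E} {a b c : ℝ}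

theorem MemLinfty.mono_left {a' : ℝ} (hu : MemLinfty u a b) (ha : a ≤ a') : MemLinfty u a' b :=
  ⟨hu.1, hu.2.imp fun _ hc => hc.mono fun _ h ht => h ⟨ha.trans_lt ht.1, ht.2⟩⟩

theorem supNorm_nonneg (u : ℝ → E) (a b : ℝ) : 0 ≤ supNorm u a b :=
  Real.sInf_nonneg fun _ hx => hx.1

theorem supNorm_le (hc : 0 ≤ c) (hb : ∀ᵐ t, t ∈ Ioo a b → ‖u t‖ ≤ c) : supNorm u a b ≤ c :=
  csInf_le ⟨0, fun _ hx => hx.1⟩ ⟨hc, hb⟩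

theorem MemLinfty.ae_norm_le_of_supNorm_lt (hu : MemLinfty u a b) (h : supNorm u a b < c) :
    ∀ᵐ t, t ∈ Ioo a b → ‖u t‖ ≤ c := by
  obtain ⟨c₀, hc₀⟩ := hu.2
  have hne : {c : ℝ | 0 ≤ c ∧ ∀ᵐ t, t ∈ Ioo a b → ‖u t‖ ≤ c}.Nonempty :=
    ⟨max c₀ 0, le_max_right _ _, hc₀.mono fun _ h ht => (h ht).trans (le_max_left _ _)⟩
  obtain ⟨c', ⟨-, hc'⟩, hlt⟩ := exists_lt_of_csInf_lt hne h
  filter_upwards [hc'] with t ht hmem using (ht hmem).trans hlt.le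

end SupNorm

variable [InnerProductSpace ℂ E]

theorem MemLinfty.const_smul {u : ℝ → E} {a b : ℝ} (hu : MemLinfty u a b) (k : ℂ) :
    MemLinfty (k • u) a b := by
  obtain ⟨hm, c, hc⟩ := hu
  refine ⟨hm.const_smul k, ‖k‖ * c, ?_⟩
  filter_upwards [hc] with t ht hmem
  rw [Pi.smul_apply, norm_smul]
  exact mul_le_mul_of_nonneg_left (ht hmem) (norm_nonneg k)

theorem IsUnitaryGroup.norm_apply {U : ℝ → E →L[ℂ] E} (hU : IsUnitaryGroup U) (t : ℝ) (x : E) :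
    ‖U t x‖ = ‖x‖ :=
  hU.2.2.1 t x

theorem IsUnitaryGroup.continuous_uncurry {U : ℝ → E →L[ℂ] E} (hU : IsUnitaryGroup U) :
    Continuous fun p : ℝ × E => U p.1 p.2 :=
  continuous_prod_of_continuous_lipschitzWith' _ 1
    (fun t => LipschitzWith.of_dist_le_mul fun x y => by
      simp [dist_eq_norm, ← map_sub, hU.norm_apply])
    hU.2.2.2

section Duhamel

variable {U : ℝ → E →L[ℂ] E} {B : E →L[ℂ] E} {T τ c : ℝ} {u v : ℝ → E}

def duhamel (U : ℝ → E →L[ℂ] E) (B : E →L[ℂ] E) (T τ : ℝ) (u : ℝ → E) : E :=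
  ∫ s in Ioo τ T, U (T - s) (B (u s))

theorem stateT_eq_add_duhamel (y₀ : E) :
    stateT U B T τ u y₀ = U T y₀ + duhamel U B T τ u :=
  rfl

theorem aestronglyMeasurable_duhamel_integrand (hU : IsUnitaryGroup U)
    (hu : AEStronglyMeasurable u) : AEStronglyMeasurable fun s => U (T - s) (B (u s)) :=
  (hU.continuous_uncurry.comp (continuous_fst.prodMk (B.continuous.comp continuous_snd)))
    |>.comp_aestronglyMeasurable
      ((continuous_const.sub continuous_id).aestronglyMeasurable.prodMk hu)

theorem ae_norm_duhamel_integrand_le (hU : IsUnitaryGroup U)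
    (hb : ∀ᵐ t, t ∈ Ioo τ T → ‖u t‖ ≤ c) :
    ∀ᵐ s, s ∈ Ioo τ T → ‖U (T - s) (B (u s))‖ ≤ ‖B‖ * c := by
  filter_upwards [hb] with s hs hmem
  rw [hU.norm_apply]
  exact (B.le_opNorm _).trans (mul_le_mul_of_nonneg_left (hs hmem) (norm_nonneg B))

theorem integrableOn_duhamel_integrand (hU : IsUnitaryGroup U) (hu : AEStronglyMeasurable u)
    (hb : ∀ᵐ t, t ∈ Ioo τ T → ‖u t‖ ≤ c) :
    IntegrableOn (fun s => U (T - s) (B (u s))) (Ioo τ T) :=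
  Measure.integrableOn_of_bounded (by simp [Real.volume_Ioo])
    (aestronglyMeasurable_duhamel_integrand hU hu)
    ((ae_restrict_iff' measurableSet_Ioo).2 (ae_norm_duhamel_integrand_le hU hb))

theorem norm_duhamel_le (hU : IsUnitaryGroup U) (hτT : τ ≤ T)
    (hb : ∀ᵐ t, t ∈ Ioo τ T → ‖u t‖ ≤ c) :
    ‖duhamel U B T τ u‖ ≤ ‖B‖ * c * (T - τ) := by
  have h := norm_setIntegral_le_of_norm_le_const_ae' (f := fun s => U (T - s) (B (u s)))
    (by simp [Real.volume_Ioo])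
    (ae_norm_duhamel_integrand_le hU hb)
  rwa [Measure.real_def, Real.volume_Ioo, ENNReal.toReal_ofReal (sub_nonneg.2 hτT)] at h

theorem duhamel_add {c' : ℝ} (hU : IsUnitaryGroup U)
    (hu : AEStronglyMeasurable u) (hub : ∀ᵐ t, t ∈ Ioo τ T → ‖u t‖ ≤ c)
    (hv : AEStronglyMeasurable v) (hvb : ∀ᵐ t, t ∈ Ioo τ T → ‖v t‖ ≤ c') :
    duhamel U B T τ (u + v) = duhamel U B T τ u + duhamel U B T τ v := by
  rw [duhamel, duhamel, duhamel, ← integral_add (integrableOn_duhamel_integrand hU hu hub)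
    (integrableOn_duhamel_integrand hU hv hvb)]
  simp only [Pi.add_apply, map_add]

theorem duhamel_smul (k : ℂ) : duhamel U B T τ (k • u) = k • duhamel U B T τ u := by
  simp only [duhamel, Pi.smul_apply, map_smul, integral_smul]

theorem norm_free_sub_le_norm_duhamel (y₀ z_d : E) :
    ‖U T y₀ - z_d‖ - ‖stateT U B T τ u y₀ - z_d‖ ≤ ‖duhamel U B T τ u‖ := by
  have h : U T y₀ - z_d - (stateT U B T τ u y₀ - z_d) = -duhamel U B T τ u := by
    rw [stateT_eq_add_duhamel]; abel
  simpa [h] using norm_sub_norm_le (U T y₀ - z_d) (stateT U B T τ u y₀ - z_d)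

end Duhamel

section OptimalProblems

variable {U : ℝ → E →L[ℂ] E} {B : E →L[ℂ] E} {y₀ z_d : E} {T τ M r C x : ℝ} {u : ℝ → E}

theorem rOP_le (hu : u ∈ UadmSet M τ T) :
    rOP U B y₀ z_d T M τ ≤ ‖stateT U B T τ u y₀ - z_d‖ :=
  csInf_le ⟨0, by rintro _ ⟨w, -, rfl⟩; exact norm_nonneg _⟩ ⟨u, hu, rfl⟩

theorem MNP_le (hu : u ∈ WadmSet U B y₀ z_d T τ r) : MNP U B y₀ z_d T τ r ≤ supNorm u τ T :=
  csInf_le ⟨0, by rintro _ ⟨w, -, rfl⟩; exact supNorm_nonneg _ _ _⟩ ⟨u, hu, rfl⟩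

theorem exists_mem_UadmSet_lt_of_rOP_lt (hM : 0 ≤ M) (h : rOP U B y₀ z_d T M τ < x) :
    ∃ u ∈ UadmSet M τ T, ‖stateT U B T τ u y₀ - z_d‖ < x := by
  have h0 : (0 : ℝ → E) ∈ UadmSet M τ T :=
    ⟨⟨aestronglyMeasurable_const, 0, by simp⟩, by simp [hM]⟩
  obtain ⟨_, ⟨u, hu, rfl⟩, hlt⟩ := exists_lt_of_csInf_lt ((nonempty_of_mem h0).image _) h
  exact ⟨u, hu, hlt⟩

theorem exists_mem_WadmSet_ae_norm_le_of_MNP_lt (h0τ : 0 ≤ τ)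
    (hW : (WadmSet U B y₀ z_d T τ r).Nonempty) (h : MNP U B y₀ z_d T τ r < x) :
    ∃ u ∈ WadmSet U B y₀ z_d T τ r, ∀ᵐ t, t ∈ Ioo τ T → ‖u t‖ ≤ x := by
  obtain ⟨_, ⟨u, hu, rfl⟩, hlt⟩ := exists_lt_of_csInf_lt (hW.image _) h
  exact ⟨u, hu, (hu.1.mono_left h0τ).ae_norm_le_of_supNorm_lt hlt⟩

def ExactlyControllableWithCost (U : ℝ → E →L[ℂ] E) (B : E →L[ℂ] E) (T C : ℝ) : Prop :=
  ∀ z : E, ∃ v : ℝ → E, AEStronglyMeasurable v ∧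
    (∀ᵐ t, t ∈ Ioo 0 T → ‖v t‖ ≤ C * ‖z‖) ∧ duhamel U B T 0 v = z

theorem exists_exactlyControllableWithCost_of_EC (hEC : EC U B) (hT : 0 < T) :
    ∃ C, 0 < C ∧ ExactlyControllableWithCost U B T C := by
  obtain ⟨C, hC, h⟩ := hEC T hT
  refine ⟨C, hC, fun z => ?_⟩
  obtain ⟨v, hv, hvb, hvz⟩ := h 0 z
  rw [map_zero, sub_zero] at hvb
  rw [stateT_eq_add_duhamel, map_zero, zero_add] at hvz
  exact ⟨v, hv, hvb, hvz⟩

theorem ExactlyControllableWithCost.nonempty_WadmSet (hctrl : ExactlyControllableWithCost U B T C)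
    (hr : 0 ≤ r) : (WadmSet U B y₀ z_d T 0 r).Nonempty := by
  obtain ⟨v, hv, hvb, hvz⟩ := hctrl (z_d - U T y₀)
  refine ⟨v, ⟨hv, _, hvb⟩, ?_⟩
  rwa [stateT_eq_add_duhamel, hvz, add_sub_cancel, sub_self, norm_zero]

theorem ExactlyControllableWithCost.exists_steer_to_sphere {c : ℝ} (hU : IsUnitaryGroup U)
    (hctrl : ExactlyControllableWithCost U B T C) (hu : AEStronglyMeasurable u)
    (hub : ∀ᵐ t, t ∈ Ioo 0 T → ‖u t‖ ≤ c) (hr : 0 ≤ r)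
    (hrd : r < ‖stateT U B T 0 u y₀ - z_d‖) :
    ∃ w, AEStronglyMeasurable w ∧
      (∀ᵐ t, t ∈ Ioo 0 T → ‖w t‖ ≤ c + C * (‖stateT U B T 0 u y₀ - z_d‖ - r)) ∧
      ‖stateT U B T 0 w y₀ - z_d‖ = r := by
  set e := stateT U B T 0 u y₀ - z_d with he
  have he0 : 0 < ‖e‖ := hr.trans_lt hrd
  set s := r / ‖e‖
  have hs1 : s ≤ 1 := div_le_one_of_le₀ hrd.le he0.le
  have hse : s * ‖e‖ = r := div_mul_cancel₀ r he0.ne'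
  obtain ⟨v, hv, hvb, hvz⟩ := hctrl (((s - 1 : ℝ) : ℂ) • e)
  have hnorm : ‖((s - 1 : ℝ) : ℂ) • e‖ = ‖e‖ - r := by
    rw [norm_smul, Complex.norm_real, Real.norm_of_nonpos (by linarith), neg_sub, sub_mul,
      one_mul, hse]
  rw [hnorm] at hvb
  refine ⟨u + v, hu.add hv, ?_, ?_⟩
  · filter_upwards [hub, hvb] with t h1 h2 hmem using
      (norm_add_le _ _).trans (add_le_add (h1 hmem) (h2 hmem))
  · have hstate : stateT U B T 0 (u + v) y₀ - z_d = (s : ℂ) • e := by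
      rw [stateT_eq_add_duhamel, duhamel_add hU hu hub hv hvb, hvz, he, stateT_eq_add_duhamel]
      push_cast
      module
    rw [hstate, norm_smul, Complex.norm_real, Real.norm_of_nonneg (by positivity), hse]

theorem MNP_le_of_rOP_le (hU : IsUnitaryGroup U) (hctrl : ExactlyControllableWithCost U B T C)
    (hC : 0 ≤ C) (hM : 0 ≤ M) (hr : 0 ≤ r) (h : rOP U B y₀ z_d T M 0 ≤ r) :
    MNP U B y₀ z_d T 0 r ≤ M := by
  refine le_of_forall_pos_le_add_mul hC fun δ hδ => ?_
  obtain ⟨u, ⟨hu, hub⟩, hlt⟩ := exists_mem_UadmSet_lt_of_rOP_lt hM (lt_add_of_le_of_pos h hδ)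
  rcases le_or_gt ‖stateT U B T 0 u y₀ - z_d‖ r with hd | hd
  · exact (MNP_le ⟨hu, hd⟩).trans
      ((supNorm_le hM hub).trans (le_add_of_nonneg_right (by positivity)))
  · obtain ⟨w, hw, hwb, hwr⟩ := hctrl.exists_steer_to_sphere hU hu.1 hub hr hd
    calc MNP U B y₀ z_d T 0 r ≤ supNorm w 0 T := MNP_le ⟨⟨hw, _, hwb⟩, hwr.le⟩
      _ ≤ M + C * (‖stateT U B T 0 u y₀ - z_d‖ - r) :=
        supNorm_le (add_nonneg hM (mul_nonneg hC (by linarith))) hwb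
      _ ≤ M + C * δ := by gcongr; linarith

theorem pos_of_MNP_le (hU : IsUnitaryGroup U) (h0τ : 0 ≤ τ) (hτT : τ ≤ T)
    (hW : (WadmSet U B y₀ z_d T τ r).Nonempty) (hr : r < ‖U T y₀ - z_d‖)
    (h : MNP U B y₀ z_d T τ r ≤ M) : 0 < M := by
  have hK : 0 ≤ ‖B‖ * (T - τ) := mul_nonneg (norm_nonneg B) (sub_nonneg.2 hτT)
  have hgap : ‖U T y₀ - z_d‖ - r ≤ ‖B‖ * (T - τ) * M := by
    refine le_of_forall_pos_le_add_mul hK fun ε hε => ?_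
    obtain ⟨u, ⟨-, hur⟩, hub⟩ :=
      exists_mem_WadmSet_ae_norm_le_of_MNP_lt h0τ hW (h.trans_lt (lt_add_of_pos_right M hε))
    have h1 : ‖U T y₀ - z_d‖ - ‖stateT U B T τ u y₀ - z_d‖ ≤ ‖duhamel U B T τ u‖ :=
      norm_free_sub_le_norm_duhamel y₀ z_d
    have h2 := norm_duhamel_le (B := B) hU hτT hub
    linarith
  exact pos_of_mul_pos_right (by linarith) hK

theorem rOP_le_of_MNP_le (hU : IsUnitaryGroup U) (h0τ : 0 ≤ τ) (hτT : τ ≤ T)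
    (hW : (WadmSet U B y₀ z_d T τ r).Nonempty) (hM : 0 < M)
    (h : MNP U B y₀ z_d T τ r ≤ M) : rOP U B y₀ z_d T M τ ≤ r := by
  refine le_of_forall_pos_le_add_mul (mul_nonneg (norm_nonneg B) (sub_nonneg.2 hτT))
    fun ε hε => ?_
  obtain ⟨u, ⟨hu, hur⟩, hub⟩ :=
    exists_mem_WadmSet_ae_norm_le_of_MNP_lt h0τ hW (h.trans_lt (lt_add_of_pos_right M hε))
  set k : ℝ := M / (M + ε)
  have hk0 : 0 ≤ k := by positivity
  have hk1 : k ≤ 1 := div_le_one_of_le₀ (by linarith) (by positivity)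
  have hku : ((k : ℂ) • u) ∈ UadmSet M τ T := by
    refine ⟨MemLinfty.const_smul hu _, ?_⟩
    filter_upwards [hub] with t ht hmem
    rw [Pi.smul_apply, norm_smul, Complex.norm_real, Real.norm_of_nonneg hk0]
    calc k * ‖u t‖ ≤ k * (M + ε) := mul_le_mul_of_nonneg_left (ht hmem) hk0
      _ = M := div_mul_cancel₀ _ (by positivity)
  have hshift : stateT U B T τ ((k : ℂ) • u) y₀ - z_d
      = (stateT U B T τ u y₀ - z_d) + ((k - 1 : ℝ) : ℂ) • duhamel U B T τ u := by
    rw [stateT_eq_add_duhamel, stateT_eq_add_duhamel, duhamel_smul]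
    push_cast
    module
  calc rOP U B y₀ z_d T M τ ≤ ‖stateT U B T τ ((k : ℂ) • u) y₀ - z_d‖ := rOP_le hku
    _ ≤ r + (1 - k) * (‖B‖ * (M + ε) * (T - τ)) := by
      rw [hshift]
      refine (norm_add_le _ _).trans (add_le_add hur ?_)
      rw [norm_smul, Complex.norm_real, Real.norm_of_nonpos (by linarith), neg_sub]
      exact mul_le_mul_of_nonneg_left (norm_duhamel_le hU hτT hub) (by linarith)
    _ = r + ‖B‖ * (T - τ) * ε := by
      simp only [k]
      field_simp
      ring

end OptimalProblems

theorem parameter_sets_equal_general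
    (U : ℝ → H →L[ℂ] H) (B : H →L[ℂ] H) (hU : IsUnitaryGroup U)
    (hEC : EC U B)
    (T : ℝ) (hT : 0 < T) (y₀ z_d : H) :
    {p : ℝ × ℝ | 0 < p.1 ∧
        p.2 ∈ Ico (rOP U B y₀ z_d T p.1 0) ‖U T y₀ - z_d‖ ∩ Ioo (0 : ℝ) ‖U T y₀ - z_d‖} =
      {p : ℝ × ℝ | p.2 ∈ Ioo (0 : ℝ) ‖U T y₀ - z_d‖ ∧ MNP U B y₀ z_d T 0 p.2 ≤ p.1} := by
  obtain ⟨C, hC, hctrl⟩ := exists_exactlyControllableWithCost_of_EC hEC hT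
  ext ⟨M, r⟩
  simp only [mem_ofPred_eq, mem_inter_iff, mem_Ico, mem_Ioo]
  constructor
  · rintro ⟨hM, ⟨hrOP, hrT⟩, hr, -⟩
    exact ⟨⟨hr, hrT⟩, MNP_le_of_rOP_le hU hctrl hC.le hM.le hr.le hrOP⟩
  · rintro ⟨⟨hr, hrT⟩, hMNP⟩
    have hW := hctrl.nonempty_WadmSet (y₀ := y₀) (z_d := z_d) hr.le
    have hM := pos_of_MNP_le hU le_rfl hT.le hW hrT hMNP
    exact ⟨hM, ⟨rOP_le_of_MNP_le hU le_rfl hT.le hW hM hMNP, hrT⟩, hr, hrT⟩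

theorem parameter_sets_equal
    (U : ℝ → H →L[ℂ] H) (B : H →L[ℂ] H) (hU : IsUnitaryGroup U) (hB : IsOrthProj B)
    (hEC : EC U B) (hECrev : EC (fun t => U (-t)) B)
    (hUC : UC U B)
    (T : ℝ) (hT : 0 < T) (y₀ z_d : H) (hrT : 0 < ‖U T y₀ - z_d‖) :
    {p : ℝ × ℝ | 0 < p.1 ∧
        p.2 ∈ Ico (rOP U B y₀ z_d T p.1 0) ‖U T y₀ - z_d‖ ∩ Ioo (0 : ℝ) ‖U T y₀ - z_d‖} =
      {p : ℝ × ℝ | p.2 ∈ Ioo (0 : ℝ) ‖U T y₀ - z_d‖ ∧ MNP U B y₀ z_d T 0 p.2 ≤ p.1} :=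
  parameter_sets_equal_general U B hU hEC T hT y₀ z_d
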